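/- arXiv:1805.05630 — 2 statements merged into one kernel-verified Lean document; each statement's English description precedes it below -/
import Mathlib

section
/- As α → +∞, I(α) = √(4π/α)(1 + O(α^{-1})); that is, there exist constants C > 0 and α_0 such that | I(α)·√(α/(4π)) − 1 | ≤ C/α for all α ≥ α_0. -/
/-!
Write the integrand as `e^{-(α/4)t²} g(t)` with `g(t) = e^{it/2}(1+it)^{-1/2}`. Then `g(0) = 1` and
`g'(t) = -(t/2) e^{it/2}(1+it)^{-3/2}`, so `|g(t) - 1| ≤ t²/2` by the mean value theorem. Hence
`I(α)` differs from the Gaussian integral `√(4π/α)` by at most half the second moment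
`∫ t² e^{-(α/4)t²} dt = (2/α)√(4π/α)`, which gives the estimate with `C = 1` for every `α > 0`.
-/

noncomputable section

/-- `I(α) = ∫ℝ e^{-(α/4)t² + it/2} (1+it)^{-1/2} dt`, principal branch of the square root. -/
def Iint (α : ℝ) : ℂ :=
  ∫ t : ℝ, Complex.exp (-(α / 4) * t ^ 2 + Complex.I * t / 2) *
    (1 + Complex.I * t) ^ (-(1 / 2 : ℂ))

open Real MeasureTheory Set

theorem integral_sq_mul_exp_neg_mul_sq {b : ℝ} (hb : 0 < b) :
    ∫ x : ℝ, x ^ 2 * exp (-b * x ^ 2) = √(π / b) / (2 * b) := by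
  have h_half : ∫ x in Ioi (0 : ℝ), x ^ 2 * exp (-b * x ^ 2) = √π / (4 * b * √b) := by
    have h := integral_rpow_mul_exp_neg_mul_rpow two_pos (by norm_num : (-1 : ℝ) < 2) hb
    simp only [rpow_two] at h
    rw [h, show (2 + 1 : ℝ) / 2 = 1 / 2 + 1 by norm_num, Gamma_add_one (by norm_num),
      Gamma_one_half_eq, show -(2 + 1 : ℝ) / 2 = -(1 + 1 / 2) by norm_num, rpow_neg hb.le,
      rpow_add hb, rpow_one, ← sqrt_eq_rpow]
    field_simp
    ring
  have h_even := integral_comp_abs (f := fun x : ℝ => x ^ 2 * exp (-b * x ^ 2))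
  simp only [sq_abs] at h_even
  rw [h_even, h_half, sqrt_div' _ hb.le]
  field_simp
  ring

theorem integrable_sq_mul_exp_neg_mul_sq {b : ℝ} (hb : 0 < b) :
    Integrable fun x : ℝ => x ^ 2 * exp (-b * x ^ 2) := by
  simpa only [rpow_two] using integrable_rpow_mul_exp_neg_mul_sq hb (s := 2) (by norm_num)

theorem norm_integral_gaussian_mul_sub_le {b K : ℝ} (hb : 0 < b) {g : ℝ → ℂ}
    (hg : AEStronglyMeasurable g) (hgK : ∀ t, ‖g t - 1‖ ≤ K * t ^ 2) :
    ‖(∫ t : ℝ, (exp (-b * t ^ 2) : ℂ) * g t) - √(π / b)‖ ≤ K * (√(π / b) / (2 * b)) := by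
  set G : ℝ → ℂ := fun t => (exp (-b * t ^ 2) : ℂ)
  have hG : Integrable G := (integrable_exp_neg_mul_sq hb).ofReal
  have h_dom : ∀ t, ‖G t * (g t - 1)‖ ≤ K * (t ^ 2 * exp (-b * t ^ 2)) := fun t => by
    calc ‖G t * (g t - 1)‖ = exp (-b * t ^ 2) * ‖g t - 1‖ := by
          rw [norm_mul, Complex.norm_real, norm_of_nonneg (exp_pos _).le]
      _ ≤ exp (-b * t ^ 2) * (K * t ^ 2) := by gcongr; exact hgK t
      _ = K * (t ^ 2 * exp (-b * t ^ 2)) := by ring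
  have h_int : Integrable fun t => G t * (g t - 1) :=
    ((integrable_sq_mul_exp_neg_mul_sq hb).const_mul K).mono'
      (hG.aestronglyMeasurable.mul (hg.sub aestronglyMeasurable_const)) (ae_of_all _ h_dom)
  have h_split : (∫ t, G t * g t) - √(π / b) = ∫ t, G t * (g t - 1) := by
    have hGg : Integrable fun t => G t * g t := by
      refine (h_int.add hG).congr (ae_of_all _ fun t => ?_)
      simp only [Pi.add_apply]; ring
    have h_gauss : ∫ t, G t = √(π / b) := by
      rw [integral_complex_ofReal, integral_gaussian]
    rw [← h_gauss, ← integral_sub hGg hG]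
    simp only [mul_sub, mul_one, G]
  calc ‖(∫ t, G t * g t) - √(π / b)‖ ≤ ∫ t : ℝ, K * (t ^ 2 * exp (-b * t ^ 2)) :=
        h_split ▸ norm_integral_le_of_norm_le ((integrable_sq_mul_exp_neg_mul_sq hb).const_mul K)
          (ae_of_all _ h_dom)
    _ = K * (√(π / b) / (2 * b)) := by
        rw [integral_const_mul, integral_sq_mul_exp_neg_mul_sq hb]

theorem norm_integral_gaussian_mul_mul_sqrt_sub_one_le {b K : ℝ} (hb : 0 < b) {g : ℝ → ℂ}
    (hg : AEStronglyMeasurable g) (hgK : ∀ t, ‖g t - 1‖ ≤ K * t ^ 2) :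
    ‖(∫ t : ℝ, (exp (-b * t ^ 2) : ℂ) * g t) * √(b / π) - 1‖ ≤ K / (2 * b) := by
  have h_inv : √(b / π) * √(π / b) = 1 := by
    rw [← sqrt_mul (by positivity), show b / π * (π / b) = 1 by field_simp, sqrt_one]
  have h_factor : (∫ t : ℝ, (exp (-b * t ^ 2) : ℂ) * g t) * √(b / π) - 1
      = √(b / π) * ((∫ t : ℝ, (exp (-b * t ^ 2) : ℂ) * g t) - √(π / b)) := by
    rw [mul_sub, ← Complex.ofReal_mul, h_inv, Complex.ofReal_one, mul_comm]
  calc ‖(∫ t : ℝ, (exp (-b * t ^ 2) : ℂ) * g t) * √(b / π) - 1‖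
      = √(b / π) * ‖(∫ t : ℝ, (exp (-b * t ^ 2) : ℂ) * g t) - √(π / b)‖ := by
        rw [h_factor, norm_mul, Complex.norm_real, norm_of_nonneg (sqrt_nonneg _)]
    _ ≤ √(b / π) * (K * (√(π / b) / (2 * b))) := by
        gcongr; exact norm_integral_gaussian_mul_sub_le hb hg hgK
    _ = K * (√(b / π) * √(π / b)) / (2 * b) := by ring
    _ = K / (2 * b) := by rw [h_inv, mul_one]

open Complex

theorem one_add_I_mul_ne_zero (s : ℝ) : 1 + I * s ≠ 0 := fun h => by
  simpa using congrArg re h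

theorem norm_one_add_I_mul_cpow_le_one (s : ℝ) {r : ℝ} (hr : r ≤ 0) :
    ‖(1 + I * s) ^ (r : ℂ)‖ ≤ 1 := by
  rw [norm_cpow_real]
  refine Real.rpow_le_one_of_one_le_of_nonpos ?_ hr
  simpa using abs_re_le_norm (1 + I * s)

theorem norm_exp_I_mul_div_two (s : ℝ) : ‖exp (I * s / 2)‖ = 1 := by
  rw [show I * s / 2 = ((s / 2 : ℝ) : ℂ) * I by push_cast; ring]
  exact norm_exp_ofReal_mul_I _

namespace Iint

def amplitude (t : ℝ) : ℂ := exp (I * t / 2) * (1 + I * t) ^ (-(1 / 2 : ℂ))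

theorem hasDerivAt_amplitude (s : ℝ) :
    HasDerivAt amplitude (-(s / 2) * exp (I * s / 2) * (1 + I * s) ^ (-(3 / 2 : ℂ))) s := by
  have h_exp : HasDerivAt (fun z : ℂ => exp (I * z / 2)) (exp (I * s / 2) * (I / 2)) s := by
    simpa using (((hasDerivAt_id (s : ℂ)).const_mul I).div_const 2).cexp
  have h_pow : HasDerivAt (fun z : ℂ => (1 + I * z) ^ (-(1 / 2 : ℂ)))
      (-(1 / 2 : ℂ) * (1 + I * s) ^ (-(1 / 2 : ℂ) - 1) * I) s :=
    (((hasDerivAt_id (s : ℂ)).const_mul I).const_add 1).cpow_const (Or.inl (by simp))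
      |>.congr_deriv (by simp)
  have h_split : (1 + I * s) ^ (-(1 / 2 : ℂ)) = (1 + I * s) * (1 + I * s) ^ (-(3 / 2 : ℂ)) := by
    rw [show -(1 / 2 : ℂ) = 1 + -(3 / 2) by norm_num, cpow_add _ _ (one_add_I_mul_ne_zero s),
      cpow_one]
  refine HasDerivAt.congr_deriv (f := amplitude) (h_exp.mul h_pow).comp_ofReal ?_
  rw [show -(1 / 2 : ℂ) - 1 = -(3 / 2) by norm_num, h_split]
  linear_combination (s / 2 * exp (I * s / 2) * (1 + I * s) ^ (-(3 / 2 : ℂ))) * I_mul_I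

theorem continuous_amplitude : Continuous amplitude :=
  continuous_iff_continuousAt.2 fun s => (hasDerivAt_amplitude s).continuousAt

theorem norm_deriv_amplitude_le (s : ℝ) :
    ‖-(s / 2) * exp (I * s / 2) * (1 + I * s) ^ (-(3 / 2 : ℂ))‖ ≤ |s| / 2 := by
  have h_pow := norm_one_add_I_mul_cpow_le_one s (r := -(3 / 2)) (by norm_num)
  push_cast at h_pow
  rw [norm_mul, norm_mul, norm_exp_I_mul_div_two, norm_neg, norm_div, norm_real, Real.norm_eq_abs,
    RCLike.norm_ofNat, mul_one]
  exact mul_le_of_le_one_right (by positivity) h_pow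

theorem norm_amplitude_sub_one_le (t : ℝ) : ‖amplitude t - 1‖ ≤ 1 / 2 * t ^ 2 := by
  have h_mvt := (convex_uIcc 0 t).norm_image_sub_le_of_norm_hasDerivWithin_le
    (fun s _ => (hasDerivAt_amplitude s).hasDerivWithinAt)
    (fun s hs => (norm_deriv_amplitude_le s).trans
      (div_le_div_of_nonneg_right (by simpa using abs_sub_left_of_mem_uIcc hs) zero_le_two))
    left_mem_uIcc right_mem_uIcc
  have h_zero : amplitude 0 = 1 := by simp [amplitude]
  rw [h_zero, sub_zero, Real.norm_eq_abs] at h_mvt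
  calc ‖amplitude t - 1‖ ≤ |t| / 2 * |t| := h_mvt
    _ = 1 / 2 * t ^ 2 := by rw [← sq_abs t]; ring

theorem eq_integral_gaussian_mul_amplitude (α : ℝ) :
    Iint α = ∫ t : ℝ, (Real.exp (-(α / 4) * t ^ 2) : ℂ) * amplitude t := by
  simp only [Iint, amplitude, Complex.exp_add, ofReal_exp]
  push_cast
  simp only [mul_assoc]

end Iint

theorem Iint_asymptotic_infinity :
    ∃ C > (0 : ℝ), ∃ α₀ : ℝ, ∀ α : ℝ, α₀ ≤ α →
      ‖Iint α * (Real.sqrt (α / (4 * Real.pi)) : ℂ) - 1‖ ≤ C / α := by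
  refine ⟨1, one_pos, 1, fun α hα => ?_⟩
  have hb : 0 < α / 4 := by linarith
  have h := norm_integral_gaussian_mul_mul_sqrt_sub_one_le hb
    Iint.continuous_amplitude.aestronglyMeasurable Iint.norm_amplitude_sub_one_le
  have h_const : 1 / 2 / (2 * (α / 4)) = 1 / α := by field_simp; ring
  rwa [← Iint.eq_integral_gaussian_mul_amplitude, div_div, h_const] at h

end
end

section
/- I(α) > 0 for every α > 0 (in particular I(α) is real for α > 0). -/
/-!
Write `(1 + it)^{-1/2} = π^{-1/2} ∫ e^{-(1+it)s²} ds` (the complex Gaussian integral, valid since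
`Re (1 + it) > 0`) and swap the order of integration, which is legitimate because the modulus of the
double integrand is `e^{-(α/4)t²} e^{-s²}`. The inner `t`-integral is then the Fourier transform of
a real Gaussian, hence real and positive, and
`I(α) = (2/√α) ∫ exp (-s² - (1/2 - s²)²/α) ds > 0`.
-/

noncomputable section

open MeasureTheory Real Complex

lemma Complex.ofReal_sqrt_eq_cpow {x : ℝ} (hx : 0 ≤ x) :
    ((√x : ℝ) : ℂ) = (x : ℂ) ^ (1 / 2 : ℂ) := by
  rw [Real.sqrt_eq_rpow, ofReal_cpow hx]
  norm_num

lemma Complex.ofReal_mul_cpow_of_pos {r : ℝ} (hr : 0 < r) {z : ℂ} (hz : z ≠ 0) (s : ℂ) :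
    ((r : ℂ) * z) ^ s = (r : ℂ) ^ s * z ^ s := by
  have hr' : (r : ℂ) ≠ 0 := ofReal_ne_zero.mpr hr.ne'
  rw [cpow_def_of_ne_zero (mul_ne_zero hr' hz), log_ofReal_mul hr hz, ofReal_log hr.le, add_mul,
    Complex.exp_add, ← cpow_def_of_ne_zero hr', ← cpow_def_of_ne_zero hz]

lemma Complex.cpow_neg_half_eq_integral_gaussian {z : ℂ} (hz : 0 < z.re) :
    z ^ (-(1 / 2 : ℂ)) = ((√π : ℝ) : ℂ)⁻¹ * ∫ s : ℝ, cexp (-z * s ^ 2) := by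
  have hz₀ : z ≠ 0 := by rintro rfl; simp at hz
  have harg : z.arg ≠ π := by
    rw [Ne, arg_eq_pi_iff, not_and_or, not_lt]
    exact Or.inl hz.le
  have hπ : (π : ℂ) ^ (1 / 2 : ℂ) ≠ 0 := by
    rw [Ne, cpow_eq_zero_iff]
    simp [pi_ne_zero]
  rw [integral_gaussian_complex hz, div_eq_mul_inv (π : ℂ),
    ofReal_mul_cpow_of_pos pi_pos (inv_ne_zero hz₀), inv_cpow _ _ harg,
    ofReal_sqrt_eq_cpow pi_pos.le, inv_mul_cancel_left₀ hπ, cpow_neg]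

lemma integral_cexp_neg_mul_sq_add_mul_I {b : ℝ} (hb : 0 < b) (c d : ℝ) :
    ∫ x : ℝ, cexp (-b * x ^ 2 + c * I * x + d) =
      ((√(π / b) * rexp (d - c ^ 2 / (4 * b)) : ℝ) : ℂ) := by
  rw [integral_cexp_quadratic (by simpa using hb), neg_neg, ← ofReal_div,
    ← ofReal_sqrt_eq_cpow (by positivity), ofReal_mul, ofReal_exp]
  congr 2
  rw [mul_pow, I_sq]
  push_cast
  field_simp

lemma integrable_prod_cexp_mul_cexp_gaussian {α : ℝ} (hα : 0 < α) :
    Integrable (fun p : ℝ × ℝ ↦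
      cexp (-(α / 4) * p.1 ^ 2 + I * p.1 / 2) * cexp (-(1 + I * p.1) * p.2 ^ 2))
      (volume.prod volume) := by
  refine (Integrable.mul_prod (integrable_exp_neg_mul_sq (by positivity : 0 < α / 4))
    (integrable_exp_neg_mul_sq one_pos)).mono' (by fun_prop) (.of_forall fun p ↦ ?_)
  simp [norm_exp, pow_two]

lemma Iint_eq_integral_rexp {α : ℝ} (hα : 0 < α) :
    Iint α = ((2 / √α * ∫ s : ℝ, rexp (-s ^ 2 - (1 / 2 - s ^ 2) ^ 2 / α) : ℝ) : ℂ) := by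
  have h_inner (s : ℝ) :
      ∫ t : ℝ, cexp (-(α / 4) * t ^ 2 + I * t / 2) * cexp (-(1 + I * t) * s ^ 2) =
        ((√(π / (α / 4)) * rexp (-s ^ 2 - (1 / 2 - s ^ 2) ^ 2 / α) : ℝ) : ℂ) := by
    have h :=
      integral_cexp_neg_mul_sq_add_mul_I (by positivity : 0 < α / 4) (1 / 2 - s ^ 2) (-s ^ 2)
    rw [show 4 * (α / 4) = α by ring] at h
    rw [← h]
    congr 1 with t
    rw [← Complex.exp_add]
    push_cast
    ring_nf
  have h_const : (√π)⁻¹ * √(π / (α / 4)) = 2 / √α := by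
    rw [div_div_eq_mul_div, Real.sqrt_div' _ hα.le, Real.sqrt_mul' _ (by norm_num : (0:ℝ) ≤ 4),
      show √4 = 2 by rw [show (4:ℝ) = 2 ^ 2 by norm_num, Real.sqrt_sq zero_le_two]]
    field_simp
  calc Iint α
      = ∫ t : ℝ, ((√π : ℝ) : ℂ)⁻¹ *
          ∫ s : ℝ, cexp (-(α / 4) * t ^ 2 + I * t / 2) * cexp (-(1 + I * t) * s ^ 2) := by
        refine integral_congr_ae (.of_forall fun t ↦ ?_)
        dsimp only
        rw [cpow_neg_half_eq_integral_gaussian (by simp), integral_const_mul]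
        ring
    _ = ((√π : ℝ) : ℂ)⁻¹ *
          ∫ s : ℝ, ((√(π / (α / 4)) * rexp (-s ^ 2 - (1 / 2 - s ^ 2) ^ 2 / α) : ℝ) : ℂ) := by
        rw [integral_const_mul, integral_integral_swap (integrable_prod_cexp_mul_cexp_gaussian hα)]
        simp_rw [h_inner]
    _ = _ := by
        rw [integral_complex_ofReal, integral_const_mul, ← ofReal_inv, ← ofReal_mul, ← mul_assoc,
          h_const]

theorem Iint_pos : ∀ α : ℝ, 0 < α → (Iint α).im = 0 ∧ 0 < (Iint α).re := by
  intro α hα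
  have h_int : Integrable fun s : ℝ ↦ rexp (-s ^ 2 - (1 / 2 - s ^ 2) ^ 2 / α) :=
    (integrable_exp_neg_mul_sq one_pos).mono' (by fun_prop) (.of_forall fun s ↦ by
      rw [norm_of_nonneg (exp_pos _).le, exp_le_exp]
      have : 0 ≤ (1 / 2 - s ^ 2) ^ 2 / α := by positivity
      linarith)
  rw [Iint_eq_integral_rexp hα, ofReal_im, ofReal_re]
  have h_pos := integral_exp_pos h_int
  exact ⟨rfl, by positivity⟩

end
end
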